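/- Let ν > 0, T > 0, a ∈ (0,1), A > 0 satisfy A² ≥ 2(T+1)²(a+1)³·M and A ≥ 4ν(T+1) + 2(a+1)², where M ≥ 0. Then for every ε ∈ (0,1), the function u_ε(t,x) = A/((t+ε)(a−x+ε)) satisfies ∂ₜu_ε − ν∂ₓ²u_ε + u_ε ∂ₓu_ε ≥ M pointwise on [0,T] × [0,a]. -/

import Mathlib

/-!
Writing `τ = t + ε` and `σ = a - x + ε`, one computes `∂ₜu = -A/(τ²σ)`, `∂ₓu = A/(τσ²)` and
`∂ₓ²u = 2A/(τσ³)`, so the Burgers residual is `A (A - σ² - 2ντ) / (τ²σ³)`. On the rectangle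
`τ ≤ T + 1` and `σ ≤ a + 1`, so the second condition on `A` gives `σ² + 2ντ ≤ A/2`, and the
residual is at least `A² / (2 τ²σ³) ≥ A² / (2 (T+1)² (a+1)³) ≥ M` by the first.
-/

open Topology

lemma hasDerivAt_div_add_const (C e t : ℝ) (h : t + e ≠ 0) :
    HasDerivAt (fun s => C / (s + e)) (-C / (t + e) ^ 2) t :=
  ((hasDerivAt_const t C).fun_div ((hasDerivAt_id' t).add_const e) h).congr_deriv (by ring)

lemma hasDerivAt_div_sub_pow (C b y : ℝ) (n : ℕ) (h : y ≠ b) :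
    HasDerivAt (fun z => C / (b - z) ^ n) (n * C / (b - y) ^ (n + 1)) y := by
  have hb : b - y ≠ 0 := sub_ne_zero.mpr h.symm
  refine ((hasDerivAt_const y C).fun_div (((hasDerivAt_id' y).const_sub b).fun_pow n)
    (pow_ne_zero n hb)).congr_deriv ?_
  rcases n with _ | k
  · simp
  · rw [Nat.add_sub_cancel]
    field_simp
    ring

lemma deriv_div_sub (C b y : ℝ) (h : y ≠ b) :
    deriv (fun z => C / (b - z)) y = C / (b - y) ^ 2 := by
  simpa using (hasDerivAt_div_sub_pow C b y 1 h).deriv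

lemma deriv_deriv_div_sub (C b y : ℝ) (h : y ≠ b) :
    deriv (deriv fun z => C / (b - z)) y = 2 * C / (b - y) ^ 3 := by
  have hnear : deriv (fun z => C / (b - z)) =ᶠ[𝓝 y] fun z => C / (b - z) ^ 2 := by
    filter_upwards [isOpen_ne.mem_nhds h] with z hz using deriv_div_sub C b z hz
  rw [hnear.deriv_eq]
  simpa using (hasDerivAt_div_sub_pow C b y 2 h).deriv

lemma burgers_residual_eq (ν A τ σ : ℝ) (hτ : τ ≠ 0) (hσ : σ ≠ 0) :
    -(A / σ) / τ ^ 2 - ν * (2 * (A / τ) / σ ^ 3) + A / (τ * σ) * (A / τ / σ ^ 2)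
      = A * (A - σ ^ 2 - 2 * ν * τ) / (τ ^ 2 * σ ^ 3) := by
  field_simp
  ring

lemma le_burgers_residual {ν A M τ σ τ₀ σ₀ : ℝ} (hν : 0 ≤ ν) (hτ : 0 < τ) (hσ : 0 < σ)
    (hτ₀ : τ ≤ τ₀) (hσ₀ : σ ≤ σ₀) (hA₁ : 2 * τ₀ ^ 2 * σ₀ ^ 3 * M ≤ A ^ 2)
    (hA₂ : 4 * ν * τ₀ + 2 * σ₀ ^ 2 ≤ A) :
    M ≤ A * (A - σ ^ 2 - 2 * ν * τ) / (τ ^ 2 * σ ^ 3) := by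
  have hA : 0 ≤ A := by nlinarith [mul_nonneg hν (hτ.le.trans hτ₀)]
  have hsmall : σ ^ 2 + 2 * ν * τ ≤ A / 2 := by
    nlinarith [pow_le_pow_left₀ hσ.le hσ₀ 2, mul_le_mul_of_nonneg_left hτ₀ hν]
  have hτ₀' : 0 < τ₀ := hτ.trans_le hτ₀
  have hσ₀' : 0 < σ₀ := hσ.trans_le hσ₀
  calc M ≤ A ^ 2 / 2 / (τ₀ ^ 2 * σ₀ ^ 3) := by
        rw [le_div_iff₀ (by positivity)]
        linarith
    _ ≤ A ^ 2 / 2 / (τ ^ 2 * σ ^ 3) := by gcongr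
    _ ≤ A * (A - σ ^ 2 - 2 * ν * τ) / (τ ^ 2 * σ ^ 3) := by
        gcongr
        nlinarith

theorem stmt_2_general (ν T a A M : ℝ) (hν : 0 < ν)
    (hA1 : 2 * (T + 1) ^ 2 * (a + 1) ^ 3 * M ≤ A ^ 2)
    (hA2 : 4 * ν * (T + 1) + 2 * (a + 1) ^ 2 ≤ A) :
    ∀ ε ∈ Set.Ioo (0 : ℝ) 1, ∀ u : ℝ → ℝ → ℝ,
      (∀ t x, u t x = A / ((t + ε) * (a - x + ε))) →
      ∀ t ∈ Set.Icc (0 : ℝ) T, ∀ x ∈ Set.Icc (0 : ℝ) a,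
        deriv (fun s => u s x) t - ν * deriv (deriv (fun y => u t y)) x
          + u t x * deriv (fun y => u t y) x ≥ M := by
  rintro ε ⟨hε0, hε1⟩ u hu t ⟨ht0, htT⟩ x ⟨hx0, hxa⟩
  have hτ : 0 < t + ε := by linarith
  have hσ : 0 < a - x + ε := by linarith
  have hu_time : (fun s => u s x) = fun s => A / (a - x + ε) / (s + ε) :=
    funext fun s => by rw [hu, div_mul_eq_div_div_swap]
  have hu_space : (fun y => u t y) = fun y => A / (t + ε) / (a + ε - y) :=
    funext fun y => by rw [hu, div_mul_eq_div_div, sub_add_eq_add_sub]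
  have hx : x ≠ a + ε := by linarith
  rw [hu_time, hu_space, (hasDerivAt_div_add_const _ ε t hτ.ne').deriv,
    deriv_deriv_div_sub _ _ _ hx, deriv_div_sub _ _ _ hx, hu, ← sub_add_eq_add_sub,
    burgers_residual_eq ν A _ _ hτ.ne' hσ.ne']
  exact le_burgers_residual hν.le hτ hσ (by linarith) (by linarith) hA1 hA2

/-- Section 4.4: under `A² ≥ 2(T+1)²(a+1)³ M` and `A ≥ 4ν(T+1) + 2(a+1)²`,
the function `u_ε(t,x) = A/((t+ε)(a−x+ε))` satisfies
`∂ₜu_ε − ν ∂ₓ²u_ε + u_ε ∂ₓu_ε ≥ M` pointwise on `[0,T] × [0,a]`. -/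
theorem stmt_2 (ν T a A M : ℝ) (hν : 0 < ν) (hT : 0 < T)
    (ha : a ∈ Set.Ioo (0 : ℝ) 1) (hA : 0 < A) (hM : 0 ≤ M)
    (hA1 : 2 * (T + 1) ^ 2 * (a + 1) ^ 3 * M ≤ A ^ 2)
    (hA2 : 4 * ν * (T + 1) + 2 * (a + 1) ^ 2 ≤ A) :
    ∀ ε ∈ Set.Ioo (0 : ℝ) 1, ∀ u : ℝ → ℝ → ℝ,
      (∀ t x, u t x = A / ((t + ε) * (a - x + ε))) →
      ∀ t ∈ Set.Icc (0 : ℝ) T, ∀ x ∈ Set.Icc (0 : ℝ) a,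
        deriv (fun s => u s x) t - ν * deriv (deriv (fun y => u t y)) x
          + u t x * deriv (fun y => u t y) x ≥ M :=
  stmt_2_general ν T a A M hν hA1 hA2
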